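/- Let Γ be a bichromatic graph that is locally like W(F4), and let x and y be two vertices of Γ of different types at distance 2 in Γ. Then the induced subgraph of Γ on the set of common neighbors of x and y is a disjoint union of μ_s edges between two short vertices and μ_l edges between two long vertices, for some natural numbers μ_s, μ_l with 1 ≤ μ_s + μ_l ≤ 2; that is, the common neighborhood has 2(μ_s + μ_l) vertices, each common neighbor is adjacent to exactly one other common neighbor, and adjacent common neighbors have the same type. -/

import Mathlib

/-- The Weyl graph of type `Bₙ`: vertices `y_{i,j}`, `1 ≤ i,j ≤ n`; distinct vertices
`y_{i,j}`, `y_{k,l}` are adjacent iff `{i,j} ∩ {k,l} = ∅` or `(k,l) = (j,i)`. -/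
def WB (n : ℕ) : SimpleGraph (Fin n × Fin n) where
  Adj p q :=
    p ≠ q ∧ (({p.1, p.2} : Set (Fin n)) ∩ {q.1, q.2} = ∅ ∨ (q.1 = p.2 ∧ q.2 = p.1))
  symm := by
    constructor
    rintro ⟨a, b⟩ ⟨c, d⟩ ⟨hne, h⟩
    refine ⟨hne.symm, ?_⟩
    rcases h with h | ⟨h1, h2⟩
    · left; rw [Set.inter_comm] at h; exact h
    · right; exact ⟨h2.symm, h1.symm⟩
  loopless := by constructor; rintro ⟨a, b⟩ ⟨hne, _⟩; exact hne rfl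

/-- The coloring of `W(Bₙ)`: `y_{i,i}` is short (`true`), `y_{i,j}` with `i ≠ j` is long. -/
def WBcolor (n : ℕ) (p : Fin n × Fin n) : Bool := decide (p.1 = p.2)

/-- The coloring of `W(Cₙ)`: obtained from `W(Bₙ)` by exchanging short and long vertices. -/
def WCcolor (n : ℕ) (p : Fin n × Fin n) : Bool := !(WBcolor n p)

/-- Isomorphism of bichromatic graphs: a graph isomorphism preserving vertex types
(`true` = short, `false` = long). -/
def BIso {V : Type*} {W : Type*} (G : SimpleGraph V) (cG : V → Bool)
    (H : SimpleGraph W) (cH : W → Bool) : Prop :=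
  ∃ e : G ≃g H, ∀ v : V, cH (e v) = cG v

/-- A bichromatic graph is locally like `W(F₄)` if the local graph at every short vertex
is isomorphic to `W(B₃)` and the local graph at every long vertex is isomorphic to `W(C₃)`. -/
def LocallyLikeWF4 {V : Type*} (G : SimpleGraph V) (c : V → Bool) : Prop :=
  ∀ v : V,
    (c v = true → BIso (G.induce (G.neighborSet v)) (fun x => c x.1) (WB 3) (WBcolor 3)) ∧
    (c v = false → BIso (G.induce (G.neighborSet v)) (fun x => c x.1) (WB 3) (WCcolor 3))

/-! Let `z` be a common neighbour of `x` and `y`. Reading the local graph at `z` as `W(B₃)`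
with the diagonal vertices being those of the same type as `z` (this covers the `W(C₃)` case too),
`x` and `y` are non-adjacent vertices of different types, and such a pair of `W(B₃)` has exactly
one common neighbour, which is diagonal. Hence every common neighbour of `x, y` has exactly one
neighbour among them, of its own type. The common neighbours of type `b` are neighbours of type `b`
of whichever of `x, y` has type `b`, so they are diagonal in its local graph and pairwise adjacent;
a clique in which some vertex has a single neighbour has exactly two vertices. -/

lemma WB_adj_iff {n : ℕ} (p q : Fin n × Fin n) :
    (WB n).Adj p q ↔ p ≠ q ∧ ((p.1 ≠ q.1 ∧ p.1 ≠ q.2 ∧ p.2 ≠ q.1 ∧ p.2 ≠ q.2) ∨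
      (q.1 = p.2 ∧ q.2 = p.1)) := by
  refine and_congr_right fun _ => or_congr_left ?_
  rw [Set.eq_empty_iff_forall_notMem]
  constructor
  · intro h
    exact ⟨fun he => h q.1 ⟨.inl he.symm, .inl rfl⟩, fun he => h q.2 ⟨.inl he.symm, .inr rfl⟩,
      fun he => h q.1 ⟨.inr he.symm, .inl rfl⟩, fun he => h q.2 ⟨.inr he.symm, .inr rfl⟩⟩
  · rintro ⟨h1, h2, h3, h4⟩ a ⟨ha | ha, ha' | ha'⟩ <;> simp_all

instance {n : ℕ} : DecidableRel (WB n).Adj := fun p q =>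
  decidable_of_iff' _ (WB_adj_iff p q)

lemma WB_adj_of_WBcolor {n : ℕ} {p q : Fin n × Fin n} (hpq : p ≠ q)
    (hp : WBcolor n p = true) (hq : WBcolor n q = true) : (WB n).Adj p q := by
  obtain ⟨i, j⟩ := p
  obtain ⟨k, l⟩ := q
  simp only [WBcolor, decide_eq_true_eq] at hp hq
  subst hp hq
  rw [WB_adj_iff]
  grind

lemma WB_three_exists_unique_commonNeighbor :
    ∀ p q : Fin 3 × Fin 3, ¬(WB 3).Adj p q → WBcolor 3 p ≠ WBcolor 3 q →
      ∃ w, ((WB 3).Adj p w ∧ (WB 3).Adj q w ∧ WBcolor 3 w = true) ∧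
        ∀ w', (WB 3).Adj p w' → (WB 3).Adj q w' → w' = w := by
  decide

lemma Set.ncard_sep_eq_true_add_ncard_sep_eq_false {α : Type*} {s : Set α} (hs : s.Finite)
    (f : α → Bool) : {a ∈ s | f a = true}.ncard + {a ∈ s | f a = false}.ncard = s.ncard := by
  rw [← Set.ncard_inter_add_ncard_sdiff_eq_ncard s {a | f a = true} hs]
  congr 2
  ext
  simp

lemma SimpleGraph.IsClique.ncard_eq_two {V : Type*} {G : SimpleGraph V} {s : Set V} {z : V}
    (hs : G.IsClique s) (hz : z ∈ s) (h : {a ∈ s | G.Adj z a}.ncard = 1) : s.ncard = 2 := by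
  have hdiff : {a ∈ s | G.Adj z a} = s \ {z} := by
    ext a
    simp only [Set.mem_ofPred_eq, Set.mem_sdiff, Set.mem_singleton_iff]
    exact ⟨fun ⟨ha, hza⟩ => ⟨ha, hza.ne'⟩, fun ⟨ha, haz⟩ => ⟨ha, hs hz ha (Ne.symm haz)⟩⟩
  rw [hdiff] at h
  have hfin : s.Finite := by
    rw [← Set.insert_sdiff_self_of_mem hz]
    exact (Set.finite_of_ncard_ne_zero (by omega)).insert z
  rw [← Set.ncard_sdiff_singleton_add_one hz hfin, h]

section LocallyLikeWF4

variable {V : Type*} {G : SimpleGraph V} {c : V → Bool}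

lemma LocallyLikeWF4.exists_iso (hloc : LocallyLikeWF4 G c) (v : V) :
    ∃ e : G.induce (G.neighborSet v) ≃g WB 3, ∀ u, WBcolor 3 (e u) = decide (c u = c v) := by
  cases hv : c v
  · obtain ⟨e, he⟩ := (hloc v).2 hv
    refine ⟨e, fun u => ?_⟩
    have := he u
    cases hu : c u <;> simp_all [WCcolor]
  · obtain ⟨e, he⟩ := (hloc v).1 hv
    exact ⟨e, fun u => by simp [he u]⟩

lemma LocallyLikeWF4.finite_neighborSet (hloc : LocallyLikeWF4 G c) (v : V) :
    (G.neighborSet v).Finite := by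
  obtain ⟨e, -⟩ := hloc.exists_iso v
  exact Set.finite_coe_iff.mp (Finite.of_equiv _ e.toEquiv.symm)

lemma LocallyLikeWF4.isClique (hloc : LocallyLikeWF4 G c) (v : V) :
    G.IsClique {z ∈ G.neighborSet v | c z = c v} := by
  obtain ⟨e, he⟩ := hloc.exists_iso v
  rintro z ⟨hz, hzv⟩ z' ⟨hz', hz'v⟩ hne
  have hadj : (WB 3).Adj (e ⟨z, hz⟩) (e ⟨z', hz'⟩) :=
    WB_adj_of_WBcolor (by simpa using hne) (by simpa [he] using hzv) (by simpa [he] using hz'v)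
  exact e.map_adj_iff.mp hadj

lemma LocallyLikeWF4.sep_commonNeighbors_adj_eq_singleton (hloc : LocallyLikeWF4 G c)
    {x y z : V} (hxy : ¬G.Adj x y) (htype : c x ≠ c y) (hz : z ∈ G.commonNeighbors x y) :
    ∃ w, {z' ∈ G.commonNeighbors x y | G.Adj z z'} = {w} ∧ c w = c z := by
  rw [G.mem_commonNeighbors] at hz
  obtain ⟨e, he⟩ := hloc.exists_iso z
  set x' : G.neighborSet z := ⟨x, hz.1.symm⟩
  set y' : G.neighborSet z := ⟨y, hz.2.symm⟩
  have hcol : WBcolor 3 (e x') ≠ WBcolor 3 (e y') := by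
    rw [he, he]
    cases hx : c x <;> cases hy : c y <;> cases c z <;> simp_all
  have hnadj : ¬(WB 3).Adj (e x') (e y') := mt e.map_adj_iff.mp hxy
  obtain ⟨w, ⟨hxw, hyw, hw⟩, huniq⟩ := WB_three_exists_unique_commonNeighbor _ _ hnadj hcol
  refine ⟨e.symm w, Set.eq_singleton_iff_unique_mem.mpr ⟨?_, ?_⟩,
    by simpa [hw] using he (e.symm w)⟩
  · rw [← e.apply_symm_apply w] at hxw hyw
    exact ⟨G.mem_commonNeighbors.mpr ⟨e.map_adj_iff.mp hxw, e.map_adj_iff.mp hyw⟩,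
      (e.symm w).2⟩
  · rintro u ⟨hu, hzu⟩
    rw [G.mem_commonNeighbors] at hu
    have := huniq (e ⟨u, hzu⟩) (e.map_adj_iff.mpr hu.1) (e.map_adj_iff.mpr hu.2)
    rw [← this, RelIso.symm_apply_apply]

lemma LocallyLikeWF4.ncard_sep_commonNeighbors_type_eq (hloc : LocallyLikeWF4 G c) {x y : V}
    (hxy : ¬G.Adj x y) (htype : c x ≠ c y) (b : Bool) :
    {z ∈ G.commonNeighbors x y | c z = b}.ncard = 0 ∨
      {z ∈ G.commonNeighbors x y | c z = b}.ncard = 2 := by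
  set S := {z ∈ G.commonNeighbors x y | c z = b}
  rcases S.eq_empty_or_nonempty with hS | ⟨z, hzC, hzb⟩
  · exact .inl (hS ▸ Set.ncard_empty V)
  obtain ⟨v, hv, hvb⟩ : ∃ v ∈ ({x, y} : Set V), c v = b := by
    cases b <;> cases hx : c x <;> cases hy : c y <;> simp_all
  have hclique : G.IsClique S := by
    refine (hloc.isClique v).subset ?_
    rintro a ⟨ha, hab⟩
    refine ⟨?_, hab.trans hvb.symm⟩
    rcases hv with rfl | rfl
    exacts [ha.1, ha.2]
  obtain ⟨w, hw, hcw⟩ := hloc.sep_commonNeighbors_adj_eq_singleton hxy htype hzC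
  have hpartner : {a ∈ S | G.Adj z a} = {a ∈ G.commonNeighbors x y | G.Adj z a} := by
    ext a
    refine ⟨fun ⟨⟨ha, _⟩, hza⟩ => ⟨ha, hza⟩, fun ha => ⟨⟨ha.1, ?_⟩, ha.2⟩⟩
    have haw : a ∈ ({w} : Set V) := hw ▸ ha
    rw [Set.mem_singleton_iff.mp haw, hcw, hzb]
  exact .inr (hclique.ncard_eq_two ⟨hzC, hzb⟩ (by rw [hpartner, hw, Set.ncard_singleton]))

end LocallyLikeWF4

theorem common_neighbors_mixed_type_distance_two {V : Type} (G : SimpleGraph V) (c : V → Bool)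
    (hloc : LocallyLikeWF4 G c) (x y : V)
    (htype : c x ≠ c y) (hdist : G.dist x y = 2) :
    (∀ z ∈ G.commonNeighbors x y,
      {z' ∈ G.commonNeighbors x y | G.Adj z z'}.ncard = 1) ∧
    (∀ z ∈ G.commonNeighbors x y, ∀ z' ∈ G.commonNeighbors x y,
      G.Adj z z' → c z = c z') ∧
    ∃ μs μl : ℕ, 1 ≤ μs + μl ∧ μs + μl ≤ 2 ∧
      {z ∈ G.commonNeighbors x y | c z = true}.ncard = 2 * μs ∧
      {z ∈ G.commonNeighbors x y | c z = false}.ncard = 2 * μl ∧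
      (G.commonNeighbors x y).ncard = 2 * (μs + μl) := by
  have hedist : G.edist x y = 2 := by
    rw [← (SimpleGraph.Reachable.of_dist_ne_zero (by omega)).coe_dist_eq_edist, hdist]
    rfl
  obtain ⟨-, hxy, hC⟩ := SimpleGraph.edist_eq_two_iff.mp hedist
  refine ⟨fun z hz => ?_, fun z hz z' hz' hzz' => ?_, ?_⟩
  · obtain ⟨w, hw, -⟩ := hloc.sep_commonNeighbors_adj_eq_singleton hxy htype hz
    rw [hw, Set.ncard_singleton]
  · obtain ⟨w, hw, hcw⟩ := hloc.sep_commonNeighbors_adj_eq_singleton hxy htype hz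
    have hz'w : z' ∈ ({w} : Set V) := hw ▸ ⟨hz', hzz'⟩
    rw [Set.mem_singleton_iff.mp hz'w, hcw]
  · have hfin : (G.commonNeighbors x y).Finite :=
      (hloc.finite_neighborSet x).subset fun z hz => hz.1
    have hsplit := Set.ncard_sep_eq_true_add_ncard_sep_eq_false hfin c
    have hpos := (Set.ncard_pos hfin).mpr hC
    refine ⟨{z ∈ G.commonNeighbors x y | c z = true}.ncard / 2,
      {z ∈ G.commonNeighbors x y | c z = false}.ncard / 2, ?_⟩
    rcases hloc.ncard_sep_commonNeighbors_type_eq hxy htype true with h | h <;>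
      rcases hloc.ncard_sep_commonNeighbors_type_eq hxy htype false with h' | h' <;>
      omega
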